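/- Let η = αM + (M−1)(M−2)γ with α > 0, γ ≥ 0, M ≥ 3. Define V(γ) = (α/η)·(1 − α/η)/(η + 1) (the marginal variance of a Selberg Dirichlet component as a function of γ). Then V is a strictly decreasing function of γ on [0, ∞); equivalently, its derivative with respect to γ is negative. -/

import Mathlib

open Set

theorem selberg_dirichlet_variance_strictAnti
    (α : ℝ) (M : ℕ) (hα : 0 < α) (hM : 3 ≤ M) :
    StrictAntiOn
      (fun γ : ℝ =>
        (α / (α * M + (M - 1) * (M - 2) * γ)) *
          (1 - α / (α * M + (M - 1) * (M - 2) * γ)) /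
          ((α * M + (M - 1) * (M - 2) * γ) + 1))
      (Set.Ici (0 : ℝ)) := by
  intro x hx y hy hxy
  have hM3 : (3:ℝ) ≤ (M:ℝ) := by exact_mod_cast hM
  have hx0 : (0:ℝ) ≤ x := hx
  have hy0 : (0:ℝ) ≤ y := hy
  have hc : 0 < ((M:ℝ) - 1) * ((M:ℝ) - 2) := by nlinarith
  set c := ((M:ℝ) - 1) * ((M:ℝ) - 2) with hcdef
  clear_value c
  have haα : 3 * α ≤ α * M + c * x := by nlinarith
  have hbα : 3 * α ≤ α * M + c * y := by nlinarith
  have hab : α * M + c * x < α * M + c * y := by nlinarith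
  set a := α * M + c * x with hadef
  set b := α * M + c * y with hbdef
  clear_value a b
  have ha : 0 < a := by linarith
  have hb : 0 < b := by linarith
  simp only
  rw [← hadef, ← hbdef]
  have hNa : α / a * (1 - α / a) = α * (a - α) / a ^ 2 := by
    field_simp
  have hNb : α / b * (1 - α / b) = α * (b - α) / b ^ 2 := by
    field_simp
  rw [hNa, hNb, div_div, div_div, div_lt_div_iff₀ (by positivity) (by positivity)]
  have key : 0 < a * b * (a + b) + a * b - α * (a^2 + a*b + b^2) - α * (a + b) := by
    nlinarith [mul_pos ha hb, mul_pos hα ha, mul_pos hα hb, sq_nonneg (a - b)]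
  nlinarith [mul_pos hα (mul_pos (sub_pos.2 hab) key)]
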